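/- arXiv:2406.04562 — 3 statements merged into one kernel-verified Lean document; each statement's English description precedes it below -/
import Mathlib

section
/- Define Red(Z:A,B) = I(Z;A) − Uni(Z:A|B), where Uni(Z:A|B) = min_{Q ∈ Δ_p} I_Q(Z;A|B) and Δ_p is the set of joint distributions with the same (Z,A) and (Z,B) marginals as the true distribution P. Then Red(Z:A,B) ≥ 0. -/
open scoped BigOperators

namespace PID

/-- `x * log (x / y)` with the convention `0 * log 0 = 0`. -/
noncomputable def ilog (x y : Real) : Real := if x = 0 then 0 else x * Real.log (x / y)

variable {A B C : Type*} [Fintype A] [Fintype B] [Fintype C]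

/-- `p` is a joint probability distribution on a triple of finite alphabets. -/
def IsJointDist (p : A -> B -> C -> Real) : Prop :=
  (forall x y z, 0 <= p x y z) /\ (Finset.sum Finset.univ fun x => Finset.sum Finset.univ fun y => Finset.sum Finset.univ fun z => p x y z) = 1

/-- Shannon mutual information (in nats) between the two coordinates of a finite joint pmf. -/
noncomputable def mi2 (p : A -> B -> Real) : Real :=
  Finset.sum Finset.univ fun x => Finset.sum Finset.univ fun y =>
    ilog (p x y) ((Finset.sum Finset.univ fun y' => p x y') * (Finset.sum Finset.univ fun x' => p x' y))

/-- Conditional mutual information `I(X;Y|Z)` (in nats) of a finite joint pmf on three alphabets. -/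
noncomputable def cmi (p : A -> B -> C -> Real) : Real :=
  Finset.sum Finset.univ fun x => Finset.sum Finset.univ fun y => Finset.sum Finset.univ fun z =>
    ilog (p x y z)
      ((Finset.sum Finset.univ fun y' => p x y' z) * (Finset.sum Finset.univ fun x' => p x' y z) /
        (Finset.sum Finset.univ fun x' => Finset.sum Finset.univ fun y' => p x' y' z))

/-- `q` agrees with `p` on the (1st,2nd)- and (1st,3rd)-marginals (the set `Delta_p`). -/
def SameMarg (p q : A -> B -> C -> Real) : Prop :=
  (forall x y, (Finset.sum Finset.univ fun z => q x y z) = Finset.sum Finset.univ fun z => p x y z) /\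
  (forall x z, (Finset.sum Finset.univ fun y => q x y z) = Finset.sum Finset.univ fun y => p x y z)

/-- Unique information `Uni(X : Y | Z)` (Bertschinger et al.):
the minimum of `I_Q(X;Y|Z)` over all `Q` in `Delta_p`. -/
noncomputable def Uni (p : A -> B -> C -> Real) : Real :=
  sInf {r : Real | exists q : A -> B -> C -> Real, IsJointDist q /\ SameMarg p q /\ r = cmi q}

/-- Redundant information `Red(X : Y, Z) = I(X;Y) - Uni(X : Y | Z)`. -/
noncomputable def Red (p : A -> B -> C -> Real) : Real :=
  mi2 (fun x y => Finset.sum Finset.univ fun z => p x y z) - Uni p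

/-- Synergistic information `Syn(X : Y, Z) = I(X;Y|Z) - Uni(X : Y | Z)`. -/
noncomputable def Syn (p : A -> B -> C -> Real) : Real :=
  cmi p - Uni p

end PID

open PID

/-! The coupling `Q₀(z,a,b) = P(z,a) P(z,b) / P(z)` (`condIndepCoupling`) lies in `Δ_p` and makes
`A` and `B` independent given `Z`, so the chain rule collapses to
`I_{Q₀}(Z;A|B) = I(Z;A) - I_{Q₀}(A;B) ≤ I(Z;A)`. Hence `Uni(Z:A|B) ≤ I(Z;A)`, the infimum being
bounded below because conditional mutual information is nonnegative (`log t ≥ 1 - 1/t`). -/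

open Finset Real

namespace PID

theorem ilog_eq_mul_log (x y : ℝ) : ilog x y = x * log (x / y) := by
  unfold ilog
  split_ifs with hx <;> simp [hx]

theorem sub_le_ilog {x y : ℝ} (hx : 0 ≤ x) (hy : 0 ≤ y) (hxy : y = 0 → x = 0) :
    x - y ≤ ilog x y := by
  rcases hx.eq_or_lt with rfl | hx
  · simpa [ilog] using hy
  have hy : 0 < y := hy.lt_of_ne fun h => hx.ne' (hxy h.symm)
  rw [ilog_eq_mul_log]
  calc x - y = x * (1 - (x / y)⁻¹) := by field_simp
    _ ≤ x * log (x / y) := by gcongr; exact one_sub_inv_le_log_of_pos (by positivity)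

theorem le_sum_of_nonneg {ι M : Type*} [Fintype ι] [AddCommMonoid M] [PartialOrder M]
    [IsOrderedAddMonoid M] {f : ι → M} (hf : ∀ i, 0 ≤ f i) (i : ι) : f i ≤ ∑ j, f j :=
  single_le_sum (fun j _ => hf j) (mem_univ i)

theorem sum_sum_sum_comm {A B C M : Type*} [Fintype A] [Fintype B] [Fintype C]
    [AddCommMonoid M] (f : A → B → C → M) : ∑ x, ∑ y, ∑ z, f x y z = ∑ z, ∑ x, ∑ y, f x y z :=
  (sum_congr rfl fun _ _ => sum_comm).trans sum_comm

section Nonneg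

variable {A B C : Type*} [Fintype A] [Fintype B] [Fintype C]

theorem mi2_nonneg {p : A → B → ℝ} (hp : ∀ x y, 0 ≤ p x y)
    (hmass : ∑ x, ∑ y, p x y = 1) : 0 ≤ mi2 p := by
  have hle_left x y : p x y ≤ ∑ y', p x y' := le_sum_of_nonneg (hp x) y
  have hle_right x y : p x y ≤ ∑ x', p x' y := le_sum_of_nonneg (hp · y) x
  have hmarg : ∑ x, ∑ y, (∑ y', p x y') * ∑ x', p x' y = 1 := by
    rw [← sum_mul_sum, sum_comm (f := fun y x => p x y), hmass, one_mul]
  calc 0 = ∑ x, ∑ y, (p x y - (∑ y', p x y') * ∑ x', p x' y) := by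
        simp only [sum_sub_distrib, hmass, hmarg, sub_self]
    _ ≤ mi2 p := sum_le_sum fun x _ => sum_le_sum fun y _ =>
        sub_le_ilog (hp x y) (mul_nonneg (sum_nonneg fun _ _ => hp _ _)
          (sum_nonneg fun _ _ => hp _ _)) fun h => by
          rcases mul_eq_zero.1 h with h | h
          exacts [le_antisymm (h ▸ hle_left x y) (hp x y),
            le_antisymm (h ▸ hle_right x y) (hp x y)]

theorem cmi_nonneg {p : A → B → C → ℝ} (hp : ∀ x y z, 0 ≤ p x y z) : 0 ≤ cmi p := by
  have hle_left x y z : p x y z ≤ ∑ y', p x y' z := le_sum_of_nonneg (hp x · z) y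
  have hle_right x y z : p x y z ≤ ∑ x', p x' y z := le_sum_of_nonneg (hp · y z) x
  have hle_total x y z : p x y z ≤ ∑ x', ∑ y', p x' y' z :=
    (hle_left x y z).trans (le_sum_of_nonneg (fun x => sum_nonneg fun y _ => hp x y z) x)
  set w : A → B → C → ℝ := fun x y z =>
    (∑ y', p x y' z) * (∑ x', p x' y z) / ∑ x', ∑ y', p x' y' z with hw
  have hw_mass z : ∑ x, ∑ y, w x y z = ∑ x, ∑ y, p x y z := by
    simp only [hw, ← sum_div, ← mul_sum, ← sum_mul]
    rw [sum_comm (f := fun y x => p x y z), mul_self_div_self]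
  calc 0 = ∑ x, ∑ y, ∑ z, (p x y z - w x y z) := by
        simp only [sum_sub_distrib]
        rw [sum_sum_sum_comm p, sum_sum_sum_comm w, sum_congr rfl fun z _ => hw_mass z, sub_self]
    _ ≤ cmi p := sum_le_sum fun x _ => sum_le_sum fun y _ => sum_le_sum fun z _ =>
        sub_le_ilog (hp x y z) (div_nonneg (mul_nonneg (sum_nonneg fun _ _ => hp _ _ _)
          (sum_nonneg fun _ _ => hp _ _ _)) (sum_nonneg fun _ _ => sum_nonneg fun _ _ => hp _ _ _))
          fun h => by
          rcases div_eq_zero_iff.1 h with h | h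
          · rcases mul_eq_zero.1 h with h | h
            exacts [le_antisymm (h ▸ hle_left x y z) (hp x y z),
              le_antisymm (h ▸ hle_right x y z) (hp x y z)]
          · exact le_antisymm (h ▸ hle_total x y z) (hp x y z)

theorem uni_le_cmi {p q : A → B → C → ℝ} (hq : IsJointDist q) (hpq : SameMarg p q) :
    Uni p ≤ cmi q :=
  csInf_le ⟨0, by rintro r ⟨q', hq', -, rfl⟩; exact cmi_nonneg hq'.1⟩ ⟨q, hq, hpq, rfl⟩

end Nonneg

section CondIndepCoupling

variable {Z A B : Type*} [Fintype A] [Fintype B] {p : Z → A → B → ℝ}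

noncomputable def condIndepCoupling (p : Z → A → B → ℝ) (z : Z) (a : A) (b : B) : ℝ :=
  (∑ b', p z a b') * (∑ a', p z a' b) / ∑ a', ∑ b', p z a' b'

theorem condIndepCoupling_nonneg (hp : ∀ z a b, 0 ≤ p z a b) (z : Z) (a : A) (b : B) :
    0 ≤ condIndepCoupling p z a b :=
  div_nonneg (mul_nonneg (sum_nonneg fun _ _ => hp _ _ _) (sum_nonneg fun _ _ => hp _ _ _))
    (sum_nonneg fun _ _ => sum_nonneg fun _ _ => hp _ _ _)

theorem sum_condIndepCoupling_right (hz : ∀ z, 0 < ∑ a, ∑ b, p z a b) (z : Z) (a : A) :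
    ∑ b, condIndepCoupling p z a b = ∑ b, p z a b := by
  simp only [condIndepCoupling]
  rw [← sum_div, ← mul_sum, sum_comm, mul_div_assoc, div_self (hz z).ne', mul_one]

theorem sum_condIndepCoupling_left (hz : ∀ z, 0 < ∑ a, ∑ b, p z a b) (z : Z) (b : B) :
    ∑ a, condIndepCoupling p z a b = ∑ a, p z a b := by
  simp only [condIndepCoupling]
  rw [← sum_div, ← sum_mul, mul_div_right_comm, div_self (hz z).ne', one_mul]

theorem sum_pos_of_condIndepCoupling_ne_zero (hp : ∀ z a b, 0 ≤ p z a b) {z : Z} {a : A}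
    {b : B} (h : condIndepCoupling p z a b ≠ 0) :
    0 < ∑ b', p z a b' ∧ 0 < ∑ a', p z a' b ∧ 0 < ∑ a', ∑ b', p z a' b' := by
  simp only [condIndepCoupling, div_ne_zero_iff, mul_ne_zero_iff] at h
  exact ⟨(sum_nonneg fun _ _ => hp _ _ _).lt_of_ne' h.1.1,
    (sum_nonneg fun _ _ => hp _ _ _).lt_of_ne' h.1.2,
    (sum_nonneg fun _ _ => sum_nonneg fun _ _ => hp _ _ _).lt_of_ne' h.2⟩

theorem sameMarg_condIndepCoupling [Fintype Z] (hz : ∀ z, 0 < ∑ a, ∑ b, p z a b) :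
    SameMarg p (condIndepCoupling p) :=
  ⟨sum_condIndepCoupling_right hz, sum_condIndepCoupling_left hz⟩

theorem isJointDist_condIndepCoupling [Fintype Z] (hp : IsJointDist p)
    (hz : ∀ z, 0 < ∑ a, ∑ b, p z a b) : IsJointDist (condIndepCoupling p) :=
  ⟨condIndepCoupling_nonneg hp.1, by simp only [sum_condIndepCoupling_right hz, hp.2]⟩

/-- Pointwise chain rule, valid because `A ⊥ B | Z` under `Q₀`:
`Q₀(z,a,b) P(b) / (P(z,b) Q₀(a,b)) = (P(z,a) / (P(z) P(a))) / (Q₀(a,b) / (P(a) P(b)))`. -/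
theorem ilog_condIndepCoupling [Fintype Z] (hp : ∀ z a b, 0 ≤ p z a b) (z : Z) (a : A) (b : B) :
    ilog (condIndepCoupling p z a b)
        ((∑ a', p z a' b) * (∑ z', condIndepCoupling p z' a b) / ∑ z', ∑ a', p z' a' b) =
      condIndepCoupling p z a b *
          log ((∑ b', p z a b') / ((∑ a', ∑ b', p z a' b') * ∑ z', ∑ b', p z' a b')) -
        condIndepCoupling p z a b * log ((∑ z', condIndepCoupling p z' a b) /
          ((∑ z', ∑ b', p z' a b') * ∑ z', ∑ a', p z' a' b)) := by
  by_cases hq : condIndepCoupling p z a b = 0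
  · simp [ilog, hq]
  obtain ⟨hza, hzb, hz⟩ := sum_pos_of_condIndepCoupling_ne_zero hp hq
  have hPA : 0 < ∑ z', ∑ b', p z' a b' :=
    hza.trans_le (le_sum_of_nonneg (f := fun z' => ∑ b', p z' a b')
      (fun _ => sum_nonneg fun _ _ => hp _ _ _) z)
  have hPB : 0 < ∑ z', ∑ a', p z' a' b :=
    hzb.trans_le (le_sum_of_nonneg (f := fun z' => ∑ a', p z' a' b)
      (fun _ => sum_nonneg fun _ _ => hp _ _ _) z)
  have hQ_nonneg := condIndepCoupling_nonneg hp
  have hM : 0 < ∑ z', condIndepCoupling p z' a b :=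
    ((hQ_nonneg z a b).lt_of_ne' hq).trans_le (le_sum_of_nonneg (hQ_nonneg · a b) z)
  rw [ilog_eq_mul_log, ← mul_sub, ← log_div (by positivity) (by positivity), condIndepCoupling]
  field_simp

theorem cmi_condIndepCoupling [Fintype Z] (hp : ∀ z a b, 0 ≤ p z a b)
    (hz : ∀ z, 0 < ∑ a, ∑ b, p z a b) :
    cmi (condIndepCoupling p) =
      mi2 (fun z a => ∑ b, p z a b) - mi2 (fun a b => ∑ z, condIndepCoupling p z a b) := by
  have hright := sum_condIndepCoupling_right hz
  have hleft := sum_condIndepCoupling_left hz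
  have hA a : ∑ b, ∑ z, condIndepCoupling p z a b = ∑ z, ∑ b, p z a b := by
    rw [sum_comm]; simp only [hright]
  have hB b : ∑ a, ∑ z, condIndepCoupling p z a b = ∑ z, ∑ a, p z a b := by
    rw [sum_comm]; simp only [hleft]
  unfold cmi mi2
  simp only [hleft, hA, hB, ilog_condIndepCoupling hp, sum_sub_distrib]
  congr 1
  · refine sum_congr rfl fun z _ => sum_congr rfl fun a _ => ?_
    rw [ilog_eq_mul_log, ← sum_mul, hright]
  · rw [← sum_sum_sum_comm fun a b z => condIndepCoupling p z a b * _]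
    refine sum_congr rfl fun a _ => sum_congr rfl fun b _ => ?_
    rw [ilog_eq_mul_log, ← sum_mul]

end CondIndepCoupling

end PID

/-- the redundant information `Red(Z:A,B) = I(Z;A) - Uni(Z:A|B)` is nonnegative. -/
theorem red_nonneg {Z A B : Type*} [Fintype Z] [Fintype A] [Fintype B]
    (p : Z -> A -> B -> Real) (hp : IsJointDist p)
    (hz : forall z, 0 < Finset.sum Finset.univ fun a => Finset.sum Finset.univ fun b => p z a b) :
    0 <= Red p := by
  have hQ := isJointDist_condIndepCoupling hp hz
  have hUni := uni_le_cmi hQ (sameMarg_condIndepCoupling hz)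
  have hAB : 0 ≤ mi2 fun a b => ∑ z, condIndepCoupling p z a b :=
    mi2_nonneg (fun a b => sum_nonneg fun z _ => hQ.1 z a b)
      ((sum_sum_sum_comm fun a b z => condIndepCoupling p z a b).trans hQ.2)
  rw [cmi_condIndepCoupling hp.1 hz] at hUni
  unfold Red
  linarith
end

section
/- If equalized odds is satisfied, i.e., I(Z;Ŷ|Y) = 0, then the statistical parity gap and the predictive parity gap satisfy the exact tradeoff I(Z;Ŷ) = I(Z;Y) − I(Z;Y|Ŷ); in particular I(Z;Ŷ) + I(Z;Y|Ŷ) = I(Z;Y) is constant for a fixed dataset, so increasing one gap decreases the other. -/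
open scoped BigOperators

open PID

noncomputable def mi3 {A B C : Type*} [Fintype A] [Fintype B] [Fintype C]
    (p : A -> B -> C -> Real) : Real :=
  Finset.sum Finset.univ fun x => Finset.sum Finset.univ fun y => Finset.sum Finset.univ fun z =>
    ilog (p x y z)
      ((Finset.sum Finset.univ fun y' => Finset.sum Finset.univ fun z' => p x y' z') *
        (Finset.sum Finset.univ fun x' => p x' y z))

lemma mi3_swap {A B C : Type*} [Fintype A] [Fintype B] [Fintype C]
    (p : A -> B -> C -> Real) : mi3 (fun x z y => p x y z) = mi3 p := by
  unfold mi3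
  refine Finset.sum_congr rfl fun x _ => ?_
  rw [Finset.sum_comm]
  refine Finset.sum_congr rfl fun y _ => Finset.sum_congr rfl fun z _ => ?_
  rw [Finset.sum_comm]

lemma pointwise_chain {B : Type*} [Fintype B] (f b : B -> Real) (a c : Real)
    (hf : ∀ y, 0 ≤ f y) (hb : ∀ y, f y ≤ b y)
    (ha : (Finset.sum Finset.univ f) ≤ a) (hc : (Finset.sum Finset.univ f) ≤ c) :
    (Finset.sum Finset.univ fun y => ilog (f y) (a * b y))
      = ilog (Finset.sum Finset.univ f) (a * c)
        + Finset.sum Finset.univ fun y => ilog (f y) ((Finset.sum Finset.univ f) * b y / c) := by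
  set s := Finset.sum Finset.univ f with hs
  by_cases h0 : s = 0
  · have h0' : Finset.sum Finset.univ f = 0 := h0
    have hz : ∀ y, f y = 0 := fun y =>
      (Finset.sum_eq_zero_iff_of_nonneg (fun y _ => hf y)).1 h0' y (Finset.mem_univ y)
    simp only [ilog]
    rw [if_pos h0]
    rw [Finset.sum_eq_zero, Finset.sum_eq_zero]
    · ring
    · intro y _; rw [if_pos (hz y)]
    · intro y _; rw [if_pos (hz y)]
  · have hspos : 0 < s := lt_of_le_of_ne (Finset.sum_nonneg fun y _ => hf y) (Ne.symm h0)
    have hapos : 0 < a := lt_of_lt_of_le hspos ha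
    have hcpos : 0 < c := lt_of_lt_of_le hspos hc
    have hterm : ∀ y, ilog (f y) (a * b y)
        = ilog (f y) (s * b y / c) + f y * Real.log (s / (a * c)) := by
      intro y
      by_cases h : f y = 0
      · simp [ilog, h]
      · have hfy : 0 < f y := lt_of_le_of_ne (hf y) (Ne.symm h)
        have hby : 0 < b y := lt_of_lt_of_le hfy (hb y)
        unfold ilog
        rw [if_neg h, if_neg h]
        have heq : f y / (a * b y) = (f y / (s * b y / c)) * (s / (a * c)) := by
          field_simp
        rw [heq, Real.log_mul (by positivity) (by positivity), mul_add]
    rw [Finset.sum_congr rfl fun y _ => hterm y, Finset.sum_add_distrib, ← Finset.sum_mul, ← hs]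
    have : ilog s (a * c) = s * Real.log (s / (a * c)) := by rw [ilog, if_neg h0]
    rw [this]; ring

lemma mi3_chain {A B C : Type*} [Fintype A] [Fintype B] [Fintype C]
    (p : A -> B -> C -> Real) (hp : ∀ x y z, 0 ≤ p x y z) :
    mi3 p = mi2 (fun x z => Finset.sum Finset.univ fun y => p x y z) + cmi p := by
  unfold mi3 mi2 cmi
  rw [← Finset.sum_add_distrib]
  refine Finset.sum_congr rfl fun x _ => ?_
  rw [Finset.sum_comm, Finset.sum_comm (f := fun (y : B) (z : C) => ilog (p x y z)
    ((Finset.sum Finset.univ fun y' => p x y' z) * (Finset.sum Finset.univ fun x' => p x' y z) /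
      (Finset.sum Finset.univ fun x' => Finset.sum Finset.univ fun y' => p x' y' z))),
    ← Finset.sum_add_distrib]
  refine Finset.sum_congr rfl fun z _ => ?_
  rw [show (Finset.sum Finset.univ fun z' => Finset.sum Finset.univ fun y => p x y z')
      = Finset.sum Finset.univ fun y' => Finset.sum Finset.univ fun z' => p x y' z' from
      Finset.sum_comm]
  exact pointwise_chain (fun y => p x y z) (fun y => Finset.sum Finset.univ fun x' => p x' y z)
    _ _ (fun y => hp x y z)
    (fun y => Finset.single_le_sum (fun x' _ => hp x' y z) (Finset.mem_univ x))
    (Finset.sum_le_sum fun y _ =>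
      Finset.single_le_sum (fun z' _ => hp x y z') (Finset.mem_univ z))
    (Finset.single_le_sum (f := fun x' => Finset.sum Finset.univ fun y' => p x' y' z)
      (fun x' _ => Finset.sum_nonneg fun y' _ => hp x' y' z) (Finset.mem_univ x))


/-- if equalized odds holds, `I(Z;Yhat|Y) = 0`, then there is an exact tradeoff
`I(Z;Yhat) = I(Z;Y) - I(Z;Y|Yhat)`; in particular the two gaps sum to the fixed dataset
quantity `I(Z;Y)`. -/
theorem eo_implies_sp_pp_tradeoff {Z Yh Y : Type*} [Fintype Z] [Fintype Yh] [Fintype Y]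
    (p : Z -> Yh -> Y -> Real) (hp : IsJointDist p)
    (hEO : cmi p = 0) :
    mi2 (fun z yh => Finset.sum Finset.univ fun y => p z yh y)
      = mi2 (fun z y => Finset.sum Finset.univ fun yh => p z yh y)
          - cmi (fun z y yh => p z yh y) := by
  have hp0 := hp.1
  have h1 := mi3_chain p hp0
  have h2 := mi3_chain (fun z y yh => p z yh y) (fun z y yh => hp0 z yh y)
  have h3 : mi3 (fun z y yh => p z yh y) = mi3 p := mi3_swap p
  beta_reduce at h2
  rw [hEO] at h1
  linarith
end

section
/- Let Z, A, B be finitely supported with P(Z=z)>0 for all z, and suppose there exists a stochastic transformation (Markov kernel) κ from B to the alphabet of A such that the channel P_{A|Z} equals the composition of P_{B|Z} with κ (Blackwell sufficiency of B for A with respect to Z). Then Uni(Z:A|B) = min_{Q∈Δ_p} I_Q(Z;A|B) = 0. -/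
open scoped BigOperators

open PID


section Aux
variable {A B C : Type*} [Fintype A] [Fintype B] [Fintype C]

lemma ilog_ge (x y : Real) (hy : 0 <= y) (h : x ≠ 0 → (0 < x ∧ 0 < y)) :
    x - y <= ilog x y := by
  unfold ilog
  by_cases hx0 : x = 0
  · simp [hx0]; linarith
  · simp only [hx0, if_false]
    obtain ⟨hx, hy'⟩ := h hx0
    have H := Real.log_le_sub_one_of_pos (div_pos hy' hx)
    have hlog : Real.log (x / y) = -Real.log (y / x) := by
      rw [Real.log_div hx0 hy'.ne', Real.log_div hy'.ne' hx0]; ring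
    have hd : x * (y / x - 1) = y - x := by field_simp
    rw [hlog]
    nlinarith [mul_le_mul_of_nonneg_left H hx.le]

lemma ilog_self (x : Real) : ilog x x = 0 := by
  unfold ilog
  by_cases hx : x = 0
  · simp [hx]
  · simp [hx, div_self hx]

lemma cmi_nonneg (q : A -> B -> C -> Real) (hq : IsJointDist q) : 0 <= cmi q := by
  obtain ⟨hq0, hq1⟩ := hq
  set T : C → Real := fun z => Finset.sum Finset.univ fun x' => Finset.sum Finset.univ fun y' => q x' y' z with hT
  have hb : ∀ x y z, q x y z -
      ((Finset.sum Finset.univ fun y' => q x y' z) * (Finset.sum Finset.univ fun x' => q x' y z) / T z)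
      <= ilog (q x y z)
      ((Finset.sum Finset.univ fun y' => q x y' z) * (Finset.sum Finset.univ fun x' => q x' y z) / T z) := by
    intro x y z
    apply ilog_ge
    · apply div_nonneg
      · exact mul_nonneg (Finset.sum_nonneg fun i _ => hq0 x i z) (Finset.sum_nonneg fun i _ => hq0 i y z)
      · exact Finset.sum_nonneg fun i _ => Finset.sum_nonneg fun j _ => hq0 i j z
    · intro hne
      have hpos : 0 < q x y z := lt_of_le_of_ne (hq0 x y z) (Ne.symm hne)
      refine ⟨hpos, ?_⟩
      have h1 : 0 < Finset.sum Finset.univ fun y' => q x y' z :=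
        lt_of_lt_of_le hpos (Finset.single_le_sum (fun i _ => hq0 x i z) (Finset.mem_univ y))
      have h2 : 0 < Finset.sum Finset.univ fun x' => q x' y z :=
        lt_of_lt_of_le hpos (Finset.single_le_sum (fun i _ => hq0 i y z) (Finset.mem_univ x))
      have h3 : 0 < T z :=
        lt_of_lt_of_le h1 (Finset.single_le_sum (f := fun x' => Finset.sum Finset.univ fun y' => q x' y' z)
          (fun i _ => Finset.sum_nonneg fun j _ => hq0 i j z) (Finset.mem_univ x))
      exact div_pos (mul_pos h1 h2) h3
  have hTsum : (Finset.sum Finset.univ fun z => T z) = 1 := by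
    rw [hT, ← hq1, Finset.sum_comm]
    exact Finset.sum_congr rfl fun x _ => Finset.sum_comm
  have hsumb : (Finset.sum Finset.univ fun x => Finset.sum Finset.univ fun y => Finset.sum Finset.univ fun z =>
      (Finset.sum Finset.univ fun y' => q x y' z) * (Finset.sum Finset.univ fun x' => q x' y z) / T z) = 1 := by
    have step : ∀ z : C, (Finset.sum Finset.univ fun x => Finset.sum Finset.univ fun y =>
        (Finset.sum Finset.univ fun y' => q x y' z) * (Finset.sum Finset.univ fun x' => q x' y z) / T z) = T z := by
      intro z
      have e0 : (Finset.sum Finset.univ fun x => Finset.sum Finset.univ fun y =>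
          (Finset.sum Finset.univ fun y' => q x y' z) * (Finset.sum Finset.univ fun x' => q x' y z) / T z)
          = (Finset.sum Finset.univ fun x => Finset.sum Finset.univ fun y' => q x y' z)
            * (Finset.sum Finset.univ fun y => Finset.sum Finset.univ fun x' => q x' y z) / T z := by
        rw [Finset.sum_mul, Finset.sum_div]
        refine Finset.sum_congr rfl fun x _ => ?_
        rw [Finset.mul_sum, Finset.sum_div]
      rw [e0]
      have e1 : (Finset.sum Finset.univ fun x => Finset.sum Finset.univ fun y' => q x y' z) = T z := rfl
      have e2 : (Finset.sum Finset.univ fun y => Finset.sum Finset.univ fun x' => q x' y z) = T z :=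
        Finset.sum_comm
      rw [e1, e2]
      by_cases hTz : T z = 0
      · simp [hTz]
      · field_simp
    have c1 : (Finset.sum Finset.univ fun x => Finset.sum Finset.univ fun y => Finset.sum Finset.univ fun z =>
          (Finset.sum Finset.univ fun y' => q x y' z) * (Finset.sum Finset.univ fun x' => q x' y z) / T z)
        = Finset.sum Finset.univ fun x => Finset.sum Finset.univ fun z => Finset.sum Finset.univ fun y =>
          (Finset.sum Finset.univ fun y' => q x y' z) * (Finset.sum Finset.univ fun x' => q x' y z) / T z :=
      Finset.sum_congr rfl fun x _ => Finset.sum_comm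
    have c2 : (Finset.sum Finset.univ fun x => Finset.sum Finset.univ fun z => Finset.sum Finset.univ fun y =>
          (Finset.sum Finset.univ fun y' => q x y' z) * (Finset.sum Finset.univ fun x' => q x' y z) / T z)
        = Finset.sum Finset.univ fun z => Finset.sum Finset.univ fun x => Finset.sum Finset.univ fun y =>
          (Finset.sum Finset.univ fun y' => q x y' z) * (Finset.sum Finset.univ fun x' => q x' y z) / T z :=
      Finset.sum_comm
    rw [c1, c2, Finset.sum_congr rfl fun z _ => step z, hTsum]
  have hle := Finset.sum_le_sum (s := (Finset.univ : Finset A)) (fun x _ =>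
    Finset.sum_le_sum (s := (Finset.univ : Finset B)) (fun y _ =>
      Finset.sum_le_sum (s := (Finset.univ : Finset C)) (fun z _ => hb x y z)))
  unfold cmi
  have hlhs : (Finset.sum Finset.univ fun x => Finset.sum Finset.univ fun y => Finset.sum Finset.univ fun z =>
      (q x y z - (Finset.sum Finset.univ fun y' => q x y' z) * (Finset.sum Finset.univ fun x' => q x' y z) / T z)) = 0 := by
    simp only [Finset.sum_sub_distrib]
    rw [hq1, hsumb]; ring
  linarith [hle, hlhs.ge, hlhs.le]

end Aux

/-- Blackwell sufficiency implies no unique information: if there is a Markov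
kernel `kappa` from the alphabet of `B` to that of `A` carrying the channel `P_{B|Z}` onto
`P_{A|Z}`, then `Uni(Z:A|B) = 0`. -/
theorem blackwell_implies_uni_zero {Z A B : Type*} [Fintype Z] [Fintype A] [Fintype B]
    (p : Z -> A -> B -> Real) (hp : IsJointDist p)
    (hz : forall z, 0 < Finset.sum Finset.univ fun a => Finset.sum Finset.univ fun b => p z a b)
    (kappa : B -> A -> Real)
    (hk0 : forall b a, 0 <= kappa b a)
    (hk1 : forall b, (Finset.sum Finset.univ fun a => kappa b a) = 1)
    (hch : forall z a,
      (Finset.sum Finset.univ fun b => p z a b)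
        = Finset.sum Finset.univ fun b => (Finset.sum Finset.univ fun a' => p z a' b) * kappa b a) :
    Uni p = 0 := by
  obtain ⟨hp0, hp1⟩ := hp
  set Q : Z → A → B → Real := fun z a b => (Finset.sum Finset.univ fun a' => p z a' b) * kappa b a with hQdef
  have hQ0 : ∀ z a b, 0 <= Q z a b := fun z a b =>
    mul_nonneg (Finset.sum_nonneg fun i _ => hp0 z i b) (hk0 b a)
  have hrow : ∀ z b, (Finset.sum Finset.univ fun a => Q z a b)
      = Finset.sum Finset.univ fun a' => p z a' b := by
    intro z b
    rw [show (Finset.sum Finset.univ fun a => Q z a b)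
        = (Finset.sum Finset.univ fun a' => p z a' b) * Finset.sum Finset.univ fun a => kappa b a
      from (Finset.mul_sum _ _ _).symm, hk1, mul_one]
  have hcol : ∀ a b, (Finset.sum Finset.univ fun z => Q z a b)
      = (Finset.sum Finset.univ fun z => Finset.sum Finset.univ fun a' => p z a' b) * kappa b a :=
    fun a b => (Finset.sum_mul _ _ _).symm
  have hden : ∀ b, (Finset.sum Finset.univ fun z => Finset.sum Finset.univ fun a => Q z a b)
      = Finset.sum Finset.univ fun z => Finset.sum Finset.univ fun a' => p z a' b :=
    fun b => Finset.sum_congr rfl fun z _ => hrow z b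
  have hjQ : IsJointDist Q := by
    refine ⟨hQ0, ?_⟩
    have e1 : (Finset.sum Finset.univ fun z => Finset.sum Finset.univ fun a => Finset.sum Finset.univ fun b => Q z a b)
        = Finset.sum Finset.univ fun z => Finset.sum Finset.univ fun b => Finset.sum Finset.univ fun a => Q z a b :=
      Finset.sum_congr rfl fun z _ => Finset.sum_comm
    rw [e1]
    have e2 : ∀ z : Z, (Finset.sum Finset.univ fun b => Finset.sum Finset.univ fun a => Q z a b)
        = Finset.sum Finset.univ fun a => Finset.sum Finset.univ fun b => p z a b := by
      intro z
      rw [Finset.sum_congr rfl fun b _ => hrow z b]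
      exact Finset.sum_comm
    rw [Finset.sum_congr rfl fun z _ => e2 z]
    exact hp1
  have hm : SameMarg p Q := by
    constructor
    · intro z a
      rw [show (Finset.sum Finset.univ fun b => Q z a b)
          = Finset.sum Finset.univ fun b => (Finset.sum Finset.univ fun a' => p z a' b) * kappa b a from rfl]
      exact (hch z a).symm
    · intro z b
      exact hrow z b
  have hcmi0 : cmi Q = 0 := by
    unfold cmi
    refine Finset.sum_eq_zero fun z _ => Finset.sum_eq_zero fun a _ => Finset.sum_eq_zero fun b _ => ?_
    rw [hrow z b, hcol a b, hden b]
    set Pzb := Finset.sum Finset.univ fun a' => p z a' b with hPzb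
    set Pb := Finset.sum Finset.univ fun z' => Finset.sum Finset.univ fun a' => p z' a' b with hPb
    by_cases hPb0 : Pb = 0
    · have hPzb0 : Pzb = 0 := by
        have hle : Pzb <= Pb :=
          Finset.single_le_sum (f := fun z' => Finset.sum Finset.univ fun a' => p z' a' b)
            (fun i _ => Finset.sum_nonneg fun j _ => hp0 i j b) (Finset.mem_univ z)
        have hge : 0 <= Pzb := Finset.sum_nonneg fun i _ => hp0 z i b
        linarith
      have : Q z a b = 0 := by rw [hQdef]; simp [← hPzb, hPzb0]
      rw [this]
      unfold ilog; simp
    · have harg : Pzb * (Pb * kappa b a) / Pb = Q z a b := by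
        rw [hQdef]
        field_simp
        ring
      rw [harg]
      exact ilog_self _
  have h0mem : (0:Real) ∈ {r : Real | ∃ q : Z -> A -> B -> Real, IsJointDist q ∧ SameMarg p q ∧ r = cmi q} :=
    ⟨Q, hjQ, hm, hcmi0.symm⟩
  have hlb : ∀ r ∈ {r : Real | ∃ q : Z -> A -> B -> Real, IsJointDist q ∧ SameMarg p q ∧ r = cmi q}, (0:Real) <= r := by
    rintro r ⟨q, hq, _, rfl⟩
    exact cmi_nonneg q hq
  unfold Uni
  exact le_antisymm (csInf_le ⟨0, hlb⟩ h0mem) (le_csInf ⟨0, h0mem⟩ hlb)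
end
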